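/- arXiv:2001.03191 — 10 statements merged into one kernel-verified Lean document; each statement's English description precedes it below -/
import Mathlib

section
/- For every real number x, cos(πx) = Σ_{j=1}^∞ t_j π^{2j} (1/4 − x²)^j, where the series converges (absolutely). -/
/-!
Since `-(πx)² = π²(1/4 - x²) - π²/4`, expanding each term of the cosine series binomially turns
`cos (πx)` into the double series `Σ_{j,k} a_{j,k} π^{2j} (1/4 - x²)^j`. It is dominated by the
binomial expansion of `Σ (π²|1/4 - x²| + π²/4)^n / (2n)!`, so it may be summed row by row, giving
`Σ_j t_j π^{2j} (1/4 - x²)^j`. At `x = 1/2` only the row `j = 0` survives, so `t_0 = cos (π/2) = 0`.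
-/

open Real

/-- The summand `a_{j,k} = (-π²/4)^k / (2j+2k)! · C(j+k, j)`. -/
noncomputable def a (j k : ℕ) : ℝ :=
  (-(π ^ 2) / 4) ^ k / (Nat.factorial (2 * j + 2 * k)) * (Nat.choose (j + k) j)

/-- `t_j = Σ_{k=0}^∞ a_{j,k}`. -/
noncomputable def t (j : ℕ) : ℝ := ∑' k : ℕ, a j k

open Finset

def binomialExpansion {R : Type*} [CommSemiring R] (c : ℕ → R) (v w : R) (p : ℕ × ℕ) : R :=
  c (p.1 + p.2) * (p.1 + p.2).choose p.1 * v ^ p.1 * w ^ p.2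

theorem sum_antidiagonal_binomialExpansion {R : Type*} [CommSemiring R] (c : ℕ → R) (v w : R)
    (n : ℕ) : ∑ p ∈ antidiagonal n, binomialExpansion c v w p = c n * (v + w) ^ n := by
  rw [(Commute.all v w).add_pow', mul_sum]
  refine sum_congr rfl fun p hp => ?_
  rw [binomialExpansion, mem_antidiagonal.mp hp, nsmul_eq_mul]
  ring

theorem HasSum.sum_antidiagonal {α A : Type*} [AddCommMonoid α] [TopologicalSpace α]
    [ContinuousAdd α] [T3Space α] [AddCommMonoid A] [HasAntidiagonal A] {f : A × A → α} {a : α}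
    (hf : HasSum f a) : HasSum (fun n => ∑ p ∈ antidiagonal n, f p) a :=
  (HasAntidiagonal.sigmaAntidiagonalEquivProd.hasSum_iff.mpr hf).sigma
    fun n => (antidiagonal n).hasSum f

theorem summable_of_summable_sum_antidiagonal_of_nonneg {A : Type*} [AddCommMonoid A]
    [HasAntidiagonal A] {f : A × A → ℝ} (hf : 0 ≤ f)
    (h : Summable fun n => ∑ p ∈ antidiagonal n, f p) : Summable f := by
  rw [← HasAntidiagonal.sigmaAntidiagonalEquivProd.summable_iff]
  refine (summable_sigma_of_nonneg fun _ => hf _).mpr ⟨fun _ => .of_finite, ?_⟩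
  simpa only [Function.comp_apply, HasAntidiagonal.sigmaAntidiagonalEquivProd_apply,
    Finset.tsum_subtype] using h

theorem norm_binomialExpansion_le {R : Type*} [NormedCommRing R] [NormOneClass R] (c : ℕ → R)
    (v w : R) (p : ℕ × ℕ) :
    ‖binomialExpansion c v w p‖ ≤ binomialExpansion (‖c ·‖) ‖v‖ ‖w‖ p := by
  unfold binomialExpansion
  refine (norm_mul_le _ _).trans ?_
  gcongr
  · refine (norm_mul_le _ _).trans ?_
    gcongr
    · refine (norm_mul_le _ _).trans ?_
      gcongr
      simpa using Nat.norm_cast_le (α := R) _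
    · exact norm_pow_le _ _
  · exact norm_pow_le _ _

theorem hasSum_binomialExpansion {R : Type*} [NormedCommRing R] [NormOneClass R] [CompleteSpace R]
    (c : ℕ → R) (v w : R) (h : Summable fun n => ‖c n‖ * (‖v‖ + ‖w‖) ^ n) :
    HasSum (binomialExpansion c v w) (∑' n, c n * (v + w) ^ n) := by
  have hnorm : Summable (binomialExpansion (‖c ·‖) ‖v‖ ‖w‖) :=
    summable_of_summable_sum_antidiagonal_of_nonneg
      (fun p => by unfold binomialExpansion; positivity)
      (by simpa only [sum_antidiagonal_binomialExpansion] using h)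
  have hs := hnorm.of_norm_bounded (norm_binomialExpansion_le c v w)
  have hdiag := hs.hasSum.sum_antidiagonal
  simp only [sum_antidiagonal_binomialExpansion] at hdiag
  rw [hdiag.tsum_eq]
  exact hs.hasSum

theorem summable_inv_factorial_two_mul_mul_pow (r : ℝ) :
    Summable fun n => ((2 * n).factorial : ℝ)⁻¹ * r ^ n := by
  refine .of_norm_bounded (Real.summable_pow_div_factorial |r|) fun n => ?_
  rw [norm_mul, norm_inv, norm_pow, Real.norm_natCast, Real.norm_eq_abs, inv_mul_eq_div]
  gcongr
  omega

theorem binomialExpansion_eq_a (u : ℝ) (j k : ℕ) :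
    binomialExpansion (fun n => ((2 * n).factorial : ℝ)⁻¹) (π ^ 2 * u) (-(π ^ 2) / 4) (j, k) =
      a j k * π ^ (2 * j) * u ^ j := by
  rw [binomialExpansion, a, mul_add, mul_pow, pow_mul]
  ring

theorem hasSum_cos_pi_mul (x : ℝ) :
    HasSum (fun j => t j * π ^ (2 * j) * (1 / 4 - x ^ 2) ^ j) (cos (π * x)) := by
  set u := 1 / 4 - x ^ 2
  have hdouble := hasSum_binomialExpansion (fun n => ((2 * n).factorial : ℝ)⁻¹) (π ^ 2 * u)
    (-(π ^ 2) / 4)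
    (by simpa only [norm_inv, Real.norm_natCast] using summable_inv_factorial_two_mul_mul_pow _)
  have hcos : ∑' n, ((2 * n).factorial : ℝ)⁻¹ * (π ^ 2 * u + -(π ^ 2) / 4) ^ n = cos (π * x) := by
    rw [← (Real.hasSum_cos _).tsum_eq]
    congr 1 with n
    rw [show π ^ 2 * u + -(π ^ 2) / 4 = -1 * (π * x) ^ 2 by ring, mul_pow, pow_mul]
    ring
  rw [hcos] at hdouble
  refine hdouble.prod_fiberwise fun j => ?_
  have hfiber := (hdouble.summable.prod_factor j).hasSum
  simpa only [binomialExpansion_eq_a, tsum_mul_right, t] using hfiber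

theorem t_zero : t 0 = 0 := by
  have hcos := hasSum_cos_pi_mul (1 / 2)
  rw [show (1 / 4 - (1 / 2) ^ 2 : ℝ) = 0 by norm_num, mul_one_div, cos_pi_div_two] at hcos
  have hsingle := hasSum_single (f := fun j => t j * π ^ (2 * j) * 0 ^ j) 0 fun j hj => by simp [hj]
  simpa using hsingle.unique hcos

/-- For every real `x`, `cos (π x) = Σ_{j=1}^∞ t_j π^{2j} (1/4 − x²)^j`,
the series converging absolutely. -/
theorem cos_eq_tsum (x : ℝ) :
    Summable (fun j : ℕ => |t (j + 1) * π ^ (2 * (j + 1)) * (1 / 4 - x ^ 2) ^ (j + 1)|) ∧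
    Real.cos (π * x) = ∑' j : ℕ, t (j + 1) * π ^ (2 * (j + 1)) * (1 / 4 - x ^ 2) ^ (j + 1) := by
  have hshift := (hasSum_nat_add_iff' 1).mpr (hasSum_cos_pi_mul x)
  rw [sum_range_one, t_zero, zero_mul, zero_mul, sub_zero] at hshift
  exact ⟨summable_abs_iff.mpr hshift.summable, hshift.tsum_eq.symm⟩
end

section
/- One has t_0 = 0 and t_1 = 1/π. -/
/-! `t 0` and `t 1` are the Taylor series of `cos` and of `sin x / (2x)` at `x = π/2`, since
`C(k, 0) = 1` and `C(k + 1, 1) / (2k + 2)! = 1 / (2 · (2k + 1)!)`. -/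

open Real

theorem Real.hasSum_neg_sq_pow_div_factorial (x : ℝ) :
    HasSum (fun k : ℕ => (-x ^ 2) ^ k / (2 * k).factorial) (cos x) := by
  convert Real.hasSum_cos x using 2 with k
  rw [neg_pow, ← pow_mul]

theorem Real.hasSum_mul_neg_sq_pow_div_factorial (x : ℝ) :
    HasSum (fun k : ℕ => x * ((-x ^ 2) ^ k / (2 * k + 1).factorial)) (sin x) := by
  convert Real.hasSum_sin x using 2 with k
  rw [neg_pow, ← pow_mul]
  ring

lemma a_zero (k : ℕ) : a 0 k = (-(π / 2) ^ 2) ^ k / (2 * k).factorial := by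
  simp only [a, Nat.choose_zero_right, Nat.cast_one, mul_one, zero_add, mul_zero]
  ring

lemma a_one (k : ℕ) :
    a 1 k = 1 / π * (π / 2 * ((-(π / 2) ^ 2) ^ k / (2 * k + 1).factorial)) := by
  have hfact : ((2 * 1 + 2 * k).factorial : ℝ) = (2 * k + 2) * (2 * k + 1).factorial := by
    rw [show 2 * 1 + 2 * k = 2 * k + 1 + 1 by ring, Nat.factorial_succ]
    push_cast
    ring
  rw [a, hfact, Nat.choose_one_right]
  field_simp
  push_cast
  ring

/-- `t_0 = 0` and `t_1 = 1/π`. -/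
theorem t_zero_and_t_one : t 0 = 0 ∧ t 1 = 1 / π := by
  constructor
  · rw [t, funext a_zero, (Real.hasSum_neg_sq_pow_div_factorial _).tsum_eq, cos_pi_div_two]
  · rw [t, funext a_one, ((Real.hasSum_mul_neg_sq_pow_div_factorial _).mul_left _).tsum_eq,
      sin_pi_div_two, mul_one]
end

section
/- For every natural number j ≥ 2, the recurrence t_j = (2(2j−3)/(π² j)) t_{j−1} − (1/(π² j(j−1))) t_{j−2} holds. -/
open Real

/-!
Write `a_{j,k} = c_{j,k}(x)` with `x = -π²/4`, where `c_{j,k}(x) = x^k C(j+k, j) / (2j+2k)!`.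
The `k = 0` terms of `c_j` and `(2j+1)(2j+2) c_{j+1}` agree, and after the shift `k ↦ k+1`
their difference is `4x(j+1)(j+2) c_{j+2,k}` termwise, by a three-term identity between
binomial coefficients. Summing over `k` gives
`t_j - (2j+1)(2j+2) t_{j+1} = -π²(j+1)(j+2) t_{j+2}`, the recurrence with `j` shifted by 2.
-/

namespace TRecurrence

open Nat

noncomputable def coeff (x : ℝ) (j k : ℕ) : ℝ :=
  x ^ k / (2 * j + 2 * k)! * (j + k).choose j

lemma a_eq_coeff : a = coeff (-(π ^ 2) / 4) := rfl

lemma summable_coeff (x : ℝ) (j : ℕ) : Summable (coeff x j) := by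
  refine ((Real.summable_pow_div_factorial (2 * |x|)).mul_left (2 ^ j)).of_norm_bounded
    fun k => ?_
  have hchoose : ((j + k).choose j : ℝ) ≤ 2 ^ (j + k) := by
    exact_mod_cast Nat.choose_le_two_pow _ _
  have hfact : (k ! : ℝ) ≤ (2 * j + 2 * k)! := by
    exact_mod_cast Nat.factorial_le (by omega)
  calc ‖coeff x j k‖ = |x| ^ k / (2 * j + 2 * k)! * (j + k).choose j := by
        simp [coeff]
    _ ≤ |x| ^ k / k ! * 2 ^ (j + k) := by gcongr
    _ = 2 ^ j * ((2 * |x|) ^ k / k !) := by ring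

lemma mul_choose_eq_mul_choose_add_mul_choose (m k : ℕ) :
    (2 * m + 2 * k + 4) * (2 * m + 2 * k + 3) * (m + k + 1).choose m
      = 2 * (2 * m + 1) * (m + 1) * (m + k + 2).choose (m + 1)
        + 4 * (m + 2) * (m + 1) * (m + k + 2).choose (m + 2) := by
  have h2 := Nat.add_one_mul_choose_eq (m + k + 1) m
  have h3 := Nat.add_one_mul_choose_eq (m + k + 1) (m + 1)
  have h4 : (m + k + 1).choose (m + 1) * (m + 1) = (m + k + 1).choose m * (k + 1) := by
    rw [Nat.choose_succ_right_eq]; congr 1; omega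
  zify at h2 h3 h4 ⊢
  linear_combination
    2 * (2 * (m : ℤ) + 1) * h2 + 4 * ((m : ℤ) + 1) * h3 - 4 * ((m : ℤ) + k + 2) * h4

lemma factorial_add_two_cast (n : ℕ) : ((n + 2)! : ℝ) = (n + 1) * (n + 2) * n ! := by
  push_cast [Nat.factorial_succ]; ring

lemma coeff_zero_eq (x : ℝ) (m : ℕ) :
    coeff x m 0 = (2 * m + 1) * (2 * m + 2) * coeff x (m + 1) 0 := by
  have h : 2 * (m + 1) = 2 * m + 2 := by ring
  simp only [coeff, add_zero, mul_zero, h, factorial_add_two_cast, Nat.choose_self]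
  have := (2 * m).factorial_pos
  field_simp
  push_cast
  ring

lemma coeff_succ_sub_eq (x : ℝ) (m k : ℕ) :
    coeff x m (k + 1) - (2 * m + 1) * (2 * m + 2) * coeff x (m + 1) (k + 1)
      = 4 * x * (m + 1) * (m + 2) * coeff x (m + 2) k := by
  have hident : ((2 * m + 2 * k + 4) * (2 * m + 2 * k + 3) * (m + k + 1).choose m : ℝ)
      = 2 * (2 * m + 1) * (m + 1) * (m + k + 2).choose (m + 1)
        + 4 * (m + 2) * (m + 1) * (m + k + 2).choose (m + 2) := by
    exact_mod_cast mul_choose_eq_mul_choose_add_mul_choose m k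
  have e1 : 2 * m + 2 * (k + 1) = 2 * m + 2 * k + 2 := by ring
  have e2 : 2 * (m + 1) + 2 * (k + 1) = 2 * m + 2 * k + 2 + 2 := by ring
  have e3 : 2 * (m + 2) + 2 * k = 2 * m + 2 * k + 2 + 2 := by ring
  have e4 : m + 1 + (k + 1) = m + k + 2 := by ring
  have e5 : m + 2 + k = m + k + 2 := by ring
  simp only [coeff, e1, e2, e3, e4, e5, ← add_assoc, factorial_add_two_cast]
  have := (2 * m + 2 * k + 2).factorial_pos
  field_simp
  push_cast at hident ⊢
  linear_combination x ^ (k + 1) * hident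

lemma tsum_coeff_sub_eq (x : ℝ) (m : ℕ) :
    ∑' k, coeff x m k - (2 * m + 1) * (2 * m + 2) * ∑' k, coeff x (m + 1) k
      = 4 * x * (m + 1) * (m + 2) * ∑' k, coeff x (m + 2) k := by
  have hs := (summable_coeff x (m + 1)).mul_left ((2 * m + 1) * (2 * m + 2) : ℝ)
  rw [← tsum_mul_left, ← (summable_coeff x m).tsum_sub hs,
    ((summable_coeff x m).sub hs).tsum_eq_zero_add, coeff_zero_eq, sub_self, zero_add]
  simp only [coeff_succ_sub_eq, tsum_mul_left]

end TRecurrence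

/-- The recurrence `t_j = (2(2j−3)/(π² j)) t_{j−1} − (1/(π² j(j−1))) t_{j−2}` for `j ≥ 2`. -/
theorem t_recurrence (j : ℕ) (hj : 2 ≤ j) :
    t j = 2 * (2 * (j : ℝ) - 3) / (π ^ 2 * j) * t (j - 1)
      - 1 / (π ^ 2 * j * ((j : ℝ) - 1)) * t (j - 2) := by
  obtain ⟨m, rfl⟩ : ∃ m, j = m + 2 := ⟨j - 2, by omega⟩
  have h := TRecurrence.tsum_coeff_sub_eq (-(π ^ 2) / 4) m
  simp only [← TRecurrence.a_eq_coeff, ← t.eq_def] at h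
  rw [show m + 2 - 1 = m + 1 by omega, Nat.add_sub_cancel]
  have := pi_ne_zero
  push_cast
  rw [add_sub_assoc, show (2 - 1 : ℝ) = 1 by norm_num]
  field_simp
  linear_combination h
end

section
/- For every natural number j ≥ 1, one has t_j > 0. -/
open Real

/-!
For `j ≥ 1` the series `t_j` is alternating, `a_{j,k} = (-1)^k b_{j,k}`, and the ratio
`b_{j,k+1} / b_{j,k} = π² / (8 (k+1) (2j+2k+1))` is at most `π²/24 < 1/2`. So the magnitudes
decrease strictly and geometrically, and the alternating series bound `t_j ≥ b_{j,0} - b_{j,1} > 0`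
applies.
-/

section Alternating

variable {E : Type*} [Ring E] [LinearOrder E] [IsOrderedRing E] [UniformSpace E]
  [IsUniformAddGroup E] [CompleteSpace E] [OrderClosedTopology E]

theorem Antitone.tsum_alternating_pos {f : ℕ → E} (hfa : Antitone f) (hfs : Summable f)
    (h10 : f 1 < f 0) : 0 < ∑' i, (-1) ^ i * f i := by
  have h := hfa.alternating_series_le_tendsto hfs.tendsto_alternating_series_tsum 1
  norm_num [Finset.sum_range_succ] at h
  exact (sub_pos.mpr h10).trans_le (sub_le_iff_le_add.mpr h)

end Alternating

noncomputable def b (j k : ℕ) : ℝ :=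
  (π ^ 2 / 4) ^ k / (Nat.factorial (2 * j + 2 * k)) * (Nat.choose (j + k) j)

lemma b_pos (j k : ℕ) : 0 < b j k := by
  unfold b
  have := Nat.choose_pos (Nat.le_add_right j k)
  positivity

lemma a_eq_neg_one_pow_mul_b (j k : ℕ) : a j k = (-1) ^ k * b j k := by
  rw [a, b, neg_div, neg_eq_neg_one_mul, mul_pow]
  ring

lemma b_succ (j k : ℕ) : b j (k + 1) = π ^ 2 / (8 * (k + 1) * (2 * j + 2 * k + 1)) * b j k := by
  have hfact : ((2 * j + 2 * (k + 1)).factorial : ℝ)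
      = (2 * j + 2 * k + 2) * (2 * j + 2 * k + 1) * (2 * j + 2 * k).factorial := by
    rw [show 2 * j + 2 * (k + 1) = 2 * j + 2 * k + 1 + 1 by ring, Nat.factorial_succ,
      Nat.factorial_succ]
    push_cast; ring
  have hchoose :
      ((k + 1 : ℕ) : ℝ) * (j + (k + 1)).choose j = (j + k + 1 : ℕ) * (j + k).choose j := by
    rw [Nat.choose_symm_add, ← add_assoc, Nat.choose_symm_add]
    exact_mod_cast ((Nat.add_one_mul_choose_eq (j + k) k).trans (mul_comm _ _)).symm
  push_cast at hchoose
  unfold b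
  rw [hfact, pow_succ]
  field_simp
  linear_combination 8 * hchoose

lemma b_succ_le_half {j : ℕ} (hj : 1 ≤ j) (k : ℕ) : b j (k + 1) ≤ 1 / 2 * b j k := by
  rw [b_succ]
  refine mul_le_mul_of_nonneg_right ?_ (b_pos j k).le
  have hj' : (1 : ℝ) ≤ j := by exact_mod_cast hj
  have hk : (0 : ℝ) ≤ k := k.cast_nonneg
  rw [div_le_iff₀ (by positivity)]
  nlinarith [pi_lt_d2, pi_pos]

lemma antitone_b {j : ℕ} (hj : 1 ≤ j) : Antitone (b j) :=
  antitone_nat_of_succ_le fun k => (b_succ_le_half hj k).trans (by linarith [b_pos j k])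

lemma summable_b {j : ℕ} (hj : 1 ≤ j) : Summable (b j) := by
  refine summable_of_ratio_norm_eventually_le (r := 1 / 2) (by norm_num) (.of_forall fun k => ?_)
  simpa only [Real.norm_of_nonneg (b_pos j _).le] using b_succ_le_half hj k

/-- For every natural `j ≥ 1`, `t_j > 0`. -/
theorem t_pos (j : ℕ) (hj : 1 ≤ j) : 0 < t j := by
  have hb10 : b j 1 < b j 0 := (b_succ_le_half hj 0).trans_lt (by linarith [b_pos j 0])
  rw [show t j = ∑' k, (-1) ^ k * b j k by simp only [t, a_eq_neg_one_pow_mul_b]]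
  exact (antitone_b hj).tsum_alternating_pos (summable_b hj) hb10
end

section
/- For every natural number j ≥ 1, one has t_j < 1/(2j)!. -/
open Real

/-- Absolute value of `a j k`. -/
noncomputable def p (j k : ℕ) : ℝ :=
  (π ^ 2 / 4) ^ k / (Nat.factorial (2 * j + 2 * k)) * (Nat.choose (j + k) j)

lemma a_eq (j k : ℕ) : a j k = (-1) ^ k * p j k := by
  unfold a p
  rw [show -(π ^ 2) / 4 = (-1) * (π ^ 2 / 4) by ring, mul_pow]
  ring

lemma p_pos (j k : ℕ) : 0 < p j k := by
  unfold p
  have h1 : (0:ℝ) < (π ^ 2 / 4) ^ k := by positivity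
  have h2 : (0:ℝ) < (Nat.factorial (2 * j + 2 * k) : ℝ) := by
    exact_mod_cast (2 * j + 2 * k).factorial_pos
  have h3 : (0:ℝ) < ((j + k).choose j : ℝ) := by
    exact_mod_cast Nat.choose_pos (Nat.le_add_right j k)
  positivity

lemma abs_a (j k : ℕ) : |a j k| = p j k := by
  rw [a_eq, abs_mul, abs_pow, abs_neg, abs_one, one_pow, one_mul,
    abs_of_pos (p_pos j k)]

lemma pi_sq_lt_ten : π ^ 2 < 10 := by
  nlinarith [Real.pi_lt_d2, Real.pi_pos]

lemma choose_nat (j k : ℕ) : (j + (k+1)).choose j * (k+1) = (j+k+1) * ((j+k).choose j) := by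
  have h := Nat.add_one_mul_choose_eq (j + k) k
  have e1 : (j + k).choose k = (j + k).choose j := by
    rw [← Nat.choose_symm (Nat.le_add_right j k)]; congr 1; omega
  have e2 : (j + k + 1).choose (k+1) = (j + k + 1).choose j := by
    rw [← Nat.choose_symm (show j ≤ j + k + 1 by omega)]; congr 1; omega
  calc (j + (k+1)).choose j * (k+1) = (j+k+1).choose j * (k+1) := by
        rw [show j+(k+1) = j+k+1 by omega]
    _ = (j+k+1).choose (k+1) * (k+1) := by rw [e2]
    _ = (j+k+1) * (j+k).choose k := h.symm
    _ = (j+k+1) * (j+k).choose j := by rw [e1]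

lemma key (j k : ℕ) (hj : 1 ≤ j) (hk : 1 ≤ k) : p j (k+1) ≤ (1/8) * p j k := by
  have hchoose : ((j + (k+1)).choose j : ℝ) * ((k:ℝ)+1) = ((j:ℝ) + k + 1) * ((j + k).choose j) := by
    exact_mod_cast congrArg (Nat.cast (R := ℝ)) (choose_nat j k)
  have hfact : (Nat.factorial (2 * j + 2 * (k+1)) : ℝ)
      = (2 * (j:ℝ) + 2 * k + 2) * ((2 * (j:ℝ) + 2 * k + 1) * (Nat.factorial (2 * j + 2 * k))) := by
    rw [show 2 * j + 2 * (k+1) = (2 * j + 2 * k + 1) + 1 by ring, Nat.factorial_succ,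
      Nat.factorial_succ]
    push_cast
    ring
  unfold p
  rw [hfact, pow_succ]
  set c : ℝ := ((j + k).choose j : ℝ) with hc
  set c' : ℝ := ((j + (k+1)).choose j : ℝ) with hc'
  set F : ℝ := ((Nat.factorial (2 * j + 2 * k)) : ℝ) with hF
  have hcpos : 0 < c := by rw [hc]; exact_mod_cast Nat.choose_pos (Nat.le_add_right j k)
  have hc'pos : 0 < c' := by rw [hc']; exact_mod_cast Nat.choose_pos (Nat.le_add_right j (k+1))
  have hFpos : 0 < F := by rw [hF]; exact_mod_cast (2 * j + 2 * k).factorial_pos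
  have hq : (0:ℝ) < (π ^ 2 / 4) ^ k := by positivity
  have hjr : (1:ℝ) ≤ (j:ℝ) := by exact_mod_cast hj
  have hkr : (1:ℝ) ≤ (k:ℝ) := by exact_mod_cast hk
  have hπ : π ^ 2 < 10 := pi_sq_lt_ten
  have hπ0 : 0 ≤ π ^ 2 := sq_nonneg π
  have hD1 : (0:ℝ) < (2 * (j:ℝ) + 2 * k + 2) * ((2 * (j:ℝ) + 2 * k + 1) * F) := by positivity
  have hkey : π ^ 2 ≤ ((k:ℝ) + 1) * (2 * (j:ℝ) + 2 * k + 1) := by nlinarith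
  have hFne : F ≠ 0 := ne_of_gt hFpos
  rw [div_mul_eq_mul_div, div_mul_eq_mul_div, div_le_iff₀ hD1]
  have hE : (1:ℝ) * ((π ^ 2 / 4) ^ k / F * c) / 8 *
      ((2 * (j:ℝ) + 2 * k + 2) * ((2 * (j:ℝ) + 2 * k + 1) * F))
      = (π ^ 2 / 4) ^ k * c * ((2 * (j:ℝ) + 2 * k + 2) * (2 * (j:ℝ) + 2 * k + 1)) / 8 := by
    field_simp
  rw [hE]
  have hint1 := mul_le_mul_of_nonneg_right hkey (le_of_lt (mul_pos hq hc'pos))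
  have hint2 : c' * ((k:ℝ)+1) * ((π ^ 2 / 4) ^ k * (2 * (j:ℝ) + 2 * k + 1))
      = ((j:ℝ) + k + 1) * c * ((π ^ 2 / 4) ^ k * (2 * (j:ℝ) + 2 * k + 1)) := by rw [hchoose]
  nlinarith [hint1, hint2]


/-- For every natural `j ≥ 1`, `t_j < 1/(2j)!`. -/
theorem t_lt (j : ℕ) (hj : 1 ≤ j) : t j < 1 / (Nat.factorial (2 * j)) := by
  have hp1 : 0 < p j 1 := p_pos j 1
  have hb : ∀ k : ℕ, p j (k+2) ≤ (1/8:ℝ)^(k+1) * p j 1 := by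
    intro k
    induction k with
    | zero => simpa using key j 1 hj le_rfl
    | succ n ih =>
      have h1 := key j (n+2) hj (by omega)
      calc p j (n+1+2) ≤ (1/8) * p j (n+2) := h1
        _ ≤ (1/8) * ((1/8:ℝ)^(n+1) * p j 1) := by
            apply mul_le_mul_of_nonneg_left ih (by norm_num)
        _ = (1/8:ℝ)^(n+1+1) * p j 1 := by ring
  have habs : ∀ k : ℕ, |a j (k+2)| ≤ (1/8:ℝ)^(k+1) * p j 1 := by
    intro k; rw [abs_a]; exact hb k
  have hg : Summable (fun k : ℕ => (1/8:ℝ)^(k+1) * p j 1) := by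
    apply Summable.mul_right
    have := (summable_geometric_of_lt_one (r := (1/8:ℝ)) (by norm_num) (by norm_num)).mul_left (1/8:ℝ)
    refine this.congr fun n => ?_
    ring
  have hs2 : Summable (fun k : ℕ => a j (k+2)) :=
    Summable.of_abs (Summable.of_nonneg_of_le (fun k => abs_nonneg _) habs hg)
  have hs1 : Summable (fun k : ℕ => a j (k+1)) :=
    (summable_nat_add_iff 1).mp hs2
  have hs0 : Summable (fun k : ℕ => a j k) :=
    (summable_nat_add_iff 1).mp hs1
  have ht : t j = a j 0 + (a j 1 + ∑' k : ℕ, a j (k+2)) := by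
    rw [t, Summable.tsum_eq_zero_add hs0, Summable.tsum_eq_zero_add hs1]
  have hT : ∑' k : ℕ, a j (k+2) ≤ ∑' k : ℕ, (1/8:ℝ)^(k+1) * p j 1 :=
    Summable.tsum_le_tsum (fun k => le_trans (le_abs_self _) (habs k)) hs2 hg
  have hgeo : ∑' k : ℕ, (1/8:ℝ)^(k+1) * p j 1 = (1/7) * p j 1 := by
    have h : ∀ k : ℕ, (1/8:ℝ)^(k+1) * p j 1 = (p j 1 * (1/8)) * (1/8:ℝ)^k := by
      intro k; ring
    rw [tsum_congr h, tsum_mul_left, tsum_geometric_of_lt_one (by norm_num) (by norm_num)]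
    have h78 : ((1:ℝ) - 1/8)⁻¹ = 8/7 := by norm_num
    rw [h78]; ring
  have ha0 : a j 0 = 1 / (Nat.factorial (2 * j)) := by
    unfold a
    norm_num
  have ha1 : a j 1 = - p j 1 := by rw [a_eq]; norm_num
  rw [ht, ha0, ha1]
  have := hgeo ▸ hT
  linarith
end

section
/- One has t_j ∼ 1/(2j)! as j → ∞; that is, the sequence (2j)! · t_j tends to 1 as j → ∞. -/
open Real

/-- Key combinatorial inequality: `(2j)! (2k)! C(j+k,j)² ≤ (2j+2k)!`. -/
lemma key_nat (j k : ℕ) :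
    Nat.factorial (2*j) * Nat.factorial (2*k) * ((j+k).choose j * (j+k).choose j)
      ≤ Nat.factorial (2*j + 2*k) := by
  have h1 : (j+k).choose j * (j+k).choose j ≤ (2*j+2*k).choose (2*j) := by
    have hv := Nat.add_choose_eq (j+k) (j+k) (2*j)
    rw [show 2*j+2*k = (j+k)+(j+k) by ring] at *
    rw [hv]
    refine Finset.single_le_sum (f := fun ij : ℕ × ℕ => (j+k).choose ij.1 * (j+k).choose ij.2)
      (fun i _ => Nat.zero_le _) (a := (j, j)) ?_
    simp [Finset.mem_antidiagonal, two_mul]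
  have h2 : (2*j+2*k).choose (2*j) * Nat.factorial (2*j) * Nat.factorial (2*k)
      = Nat.factorial (2*j+2*k) := by
    have := Nat.choose_mul_factorial_mul_factorial (n := 2*j+2*k) (k := 2*j)
      (Nat.le_add_right _ _)
    simpa [Nat.add_sub_cancel_left] using this
  calc Nat.factorial (2*j) * Nat.factorial (2*k) * ((j+k).choose j * (j+k).choose j)
      ≤ Nat.factorial (2*j) * Nat.factorial (2*k) * ((2*j+2*k).choose (2*j)) :=
        Nat.mul_le_mul_left _ h1
    _ = Nat.factorial (2*j+2*k) := by rw [← h2]; ring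

lemma abs_a_s5 (j k : ℕ) :
    |a j k| = (π^2/4)^k * ((j+k).choose j) / Nat.factorial (2*j + 2*k) := by
  unfold a
  rw [abs_mul, abs_div, abs_pow]
  rw [show |(-(π ^ 2) / 4 : ℝ)| = π^2/4 by
    rw [show (-(π^2)/4 : ℝ) = -(π^2/4) by ring, abs_neg]; exact abs_of_nonneg (by positivity)]
  rw [abs_of_nonneg (a := ((Nat.factorial (2*j+2*k) : ℕ) : ℝ)) (by positivity),
    abs_of_nonneg (a := (((j+k).choose j : ℕ) : ℝ)) (by positivity)]
  ring

/-- Main pointwise bound. -/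
lemma bound1 (j k : ℕ) :
    (Nat.factorial (2*j) : ℝ) * |a j k|
      ≤ (π^2/4)^k / (Nat.factorial (2*k) * ((j+k).choose j)) := by
  rw [abs_a_s5]
  have hC : (0:ℝ) < ((j+k).choose j : ℝ) := by
    exact_mod_cast Nat.choose_pos (Nat.le_add_right _ _)
  have hF : (0:ℝ) < (Nat.factorial (2*j+2*k) : ℝ) := by positivity
  have hK : (0:ℝ) < (Nat.factorial (2*k) : ℝ) := by positivity
  have hkey : (Nat.factorial (2*j) : ℝ) * Nat.factorial (2*k) *
      (((j+k).choose j) * ((j+k).choose j)) ≤ Nat.factorial (2*j+2*k) := by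
    exact_mod_cast key_nat j k
  rw [mul_div_assoc', div_le_div_iff₀ hF (by positivity)]
  have hpow : (0:ℝ) ≤ (π^2/4)^k := by positivity
  calc (Nat.factorial (2*j) : ℝ) * ((π^2/4)^k * ((j+k).choose j)) *
        (Nat.factorial (2*k) * ((j+k).choose j))
      = (π^2/4)^k * ((Nat.factorial (2*j) : ℝ) * Nat.factorial (2*k) *
          (((j+k).choose j) * ((j+k).choose j))) := by ring
    _ ≤ (π^2/4)^k * Nat.factorial (2*j+2*k) := by
        exact mul_le_mul_of_nonneg_left hkey hpow

lemma abs_a_le (j k : ℕ) : |a j k| ≤ (π^2/4)^k / Nat.factorial (2*k) := by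
  have h1 := bound1 j k
  have hC : (1:ℝ) ≤ ((j+k).choose j : ℝ) := by
    exact_mod_cast Nat.one_le_iff_ne_zero.mpr (Nat.choose_pos (Nat.le_add_right _ _)).ne'
  have hJ : (1:ℝ) ≤ (Nat.factorial (2*j) : ℝ) := by
    exact_mod_cast Nat.one_le_iff_ne_zero.mpr (Nat.factorial_pos _).ne'
  have hK : (0:ℝ) < (Nat.factorial (2*k) : ℝ) := by positivity
  calc |a j k| ≤ (Nat.factorial (2*j) : ℝ) * |a j k| := le_mul_of_one_le_left (abs_nonneg _) hJ
    _ ≤ (π^2/4)^k / (Nat.factorial (2*k) * ((j+k).choose j)) := h1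
    _ ≤ (π^2/4)^k / Nat.factorial (2*k) := by
        apply div_le_div_of_nonneg_left (by positivity) hK
        exact le_mul_of_one_le_right hK.le hC

lemma summable_g : Summable (fun k : ℕ => (π^2/4)^k / Nat.factorial (2*k)) := by
  apply Summable.of_nonneg_of_le (fun k => by positivity)
    (fun k => ?_) (Real.summable_pow_div_factorial (π^2/4))
  apply div_le_div_of_nonneg_left (by positivity) (by positivity)
  exact_mod_cast Nat.factorial_le (by omega)

lemma summable_a (j : ℕ) : Summable (fun k => a j k) := by
  apply Summable.of_norm
  apply Summable.of_nonneg_of_le (fun k => norm_nonneg _) (fun k => ?_) summable_g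
  simpa using abs_a_le j k

/-- `t_j ∼ 1/(2j)!` as `j → ∞`, i.e. `(2j)! · t_j → 1`. -/
theorem t_asymp :
    Filter.Tendsto (fun j : ℕ => (Nat.factorial (2 * j) : ℝ) * t j)
      Filter.atTop (nhds 1) := by
  -- the tail sum
  set R : ℕ → ℝ := fun j => ∑' k : ℕ, (Nat.factorial (2*j) : ℝ) * a j (k+1) with hR
  have ha0 : ∀ j, a j 0 = 1 / Nat.factorial (2*j) := by
    intro j; unfold a; simp
  have hsumj : ∀ j, Summable (fun k => (Nat.factorial (2*j) : ℝ) * a j k) :=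
    fun j => (summable_a j).mul_left _
  have hsplit : ∀ j : ℕ, (Nat.factorial (2 * j) : ℝ) * t j = 1 + R j := by
    intro j
    have := Summable.tsum_eq_zero_add (f := fun k => (Nat.factorial (2*j) : ℝ) * a j k) (hsumj j)
    rw [t, ← tsum_mul_left, this]
    simp only [ha0, hR]
    have h0 : (Nat.factorial (2*j) : ℝ) ≠ 0 := by positivity
    field_simp
  simp only [hsplit]
  have hRz : Filter.Tendsto R Filter.atTop (nhds 0) := by
    set S : ℝ := ∑' k : ℕ, (π^2/4)^(k+1) / Nat.factorial (2*(k+1)) with hS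
    have hgsum : Summable (fun k : ℕ => (π^2/4)^(k+1) / Nat.factorial (2*(k+1))) :=
      summable_g.comp_injective (add_left_injective 1)
    refine squeeze_zero_norm (a := fun j : ℕ => S / ((j : ℝ) + 1)) ?_ ?_
    · intro j
      have hb : ∀ k : ℕ, ‖(Nat.factorial (2*j) : ℝ) * a j (k+1)‖
          ≤ ((π^2/4)^(k+1) / Nat.factorial (2*(k+1))) / ((j:ℝ)+1) := by
        intro k
        have h1 := bound1 j (k+1)
        have hC : ((j:ℝ)+1) ≤ ((j+(k+1)).choose j : ℝ) := by
          have : (j+1).choose j ≤ (j+(k+1)).choose j :=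
            Nat.choose_mono j (by omega)
          rw [Nat.choose_succ_self_right] at this
          exact_mod_cast this
        have hK : (0:ℝ) < (Nat.factorial (2*(k+1)) : ℝ) := by positivity
        rw [norm_mul, norm_natCast, Real.norm_eq_abs]
        refine h1.trans ?_
        rw [div_div]
        apply div_le_div_of_nonneg_left (by positivity) (by positivity)
        exact mul_le_mul_of_nonneg_left hC hK.le
      have hsumnorm : Summable (fun k : ℕ => ‖(Nat.factorial (2*j) : ℝ) * a j (k+1)‖) := by
        apply Summable.of_nonneg_of_le (fun k => norm_nonneg _) hb
        exact hgsum.div_const _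
      calc ‖R j‖ ≤ ∑' k : ℕ, ‖(Nat.factorial (2*j) : ℝ) * a j (k+1)‖ :=
            norm_tsum_le_tsum_norm hsumnorm
        _ ≤ ∑' k : ℕ, ((π^2/4)^(k+1) / Nat.factorial (2*(k+1))) / ((j:ℝ)+1) :=
            Summable.tsum_le_tsum hb hsumnorm (hgsum.div_const _)
        _ = S / ((j:ℝ)+1) := by rw [tsum_div_const]
    · have h := tendsto_const_div_atTop_nhds_zero_nat S
      have h2 := h.comp (Filter.tendsto_add_atTop_nat 1)
      have heq : (fun j : ℕ => S / ((j:ℝ) + 1)) = (fun n : ℕ => S / (n:ℝ)) ∘ (fun a => a + 1) := by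
        funext j; simp [Function.comp]
      rw [heq]; exact h2
  have := Filter.Tendsto.const_add (1:ℝ) hRz
  simpa using this
end

section
/- For every natural number j ≥ 1, one has t_j = (π^{1−j}/(2·j!)) · J_{j−1/2}(π/2), where J_ν(z) := Σ_{k=0}^∞ (−1)^k (z/2)^{ν+2k} / (k! · Γ(ν+k+1)) is the Bessel function of the first kind of order ν, defined by this convergent series (Γ denoting the Gamma function). Equivalently, t_j = (π^{1−j}/(2·j!)) · Σ_{k=0}^∞ (−1)^k (π/4)^{j−1/2+2k} / (k! · Γ(j+1/2+k)). -/
open Real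

/-- The Bessel function of the first kind `J_ν(z)`, defined by its series
`J_ν(z) = Σ_{k=0}^∞ (−1)^k (z/2)^{ν+2k} / (k! Γ(ν+k+1))` (real powers). -/
noncomputable def besselJ (ν z : ℝ) : ℝ :=
  ∑' k : ℕ, (-1) ^ k * (z / 2) ^ (ν + 2 * k) / (Nat.factorial k * Real.Gamma (ν + k + 1))

/-!
The identity holds term by term. At half-integer order `ν = j - 1/2` the Gamma factor is
`Γ(j + k + 1/2) = (2j+2k)! √π / (4^(j+k) (j+k)!)`, and its `√π` cancels the `√π` coming from
`(π/4)^(-1/2)`; what remains of the `k`-th Bessel term is `2 π^(j-1) j!` times `a j k`.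
-/

open scoped Nat

theorem Real.Gamma_nat_add_half_eq_factorial (n : ℕ) :
    Gamma (n + 1 / 2) = (2 * n)! * √π / (4 ^ n * n !) := by
  induction n with
  | zero => simp [-one_div, Gamma_one_half_eq]
  | succ n ih =>
    rw [Nat.cast_succ, add_right_comm, Gamma_add_one (by positivity), ih,
      show 2 * (n + 1) = 2 * n + 1 + 1 by ring, Nat.factorial_succ, Nat.factorial_succ,
      Nat.factorial_succ]
    push_cast
    field_simp
    ring

theorem Real.rpow_nat_sub_half {x : ℝ} (hx : 0 < x) (n : ℕ) :
    x ^ ((n : ℝ) - 1 / 2) = x ^ n / √x := by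
  rw [rpow_sub hx, rpow_natCast, sqrt_eq_rpow]

noncomputable def besselJTerm (ν z : ℝ) (k : ℕ) : ℝ :=
  (-1) ^ k * (z / 2) ^ (ν + 2 * k) / (k ! * Gamma (ν + k + 1))

theorem besselJ_eq_tsum_besselJTerm (ν z : ℝ) : besselJ ν z = ∑' k, besselJTerm ν z k := rfl

theorem a_eq_mul_besselJTerm (j k : ℕ) :
    a j k = π ^ ((1 : ℝ) - j) / (2 * j !) * besselJTerm (j - 1 / 2) (π / 2) k := by
  have hΓ : (j : ℝ) - 1 / 2 + k + 1 = ((j + k : ℕ) : ℝ) + 1 / 2 := by push_cast; ring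
  have hexp : (j : ℝ) - 1 / 2 + 2 * k = ((j + 2 * k : ℕ) : ℝ) - 1 / 2 := by push_cast; ring
  have hsqrt : √(π / 4) = √π / 2 := by
    rw [sqrt_div' _ (by norm_num : (0 : ℝ) ≤ 4), show (4 : ℝ) = 2 ^ 2 by norm_num,
      sqrt_sq two_pos.le]
  have hchoose : ((j + k).choose j : ℝ) = (j + k)! / (j ! * k !) := by
    rw [eq_div_iff (by positivity), mul_comm (j ! : ℝ), ← mul_assoc, add_comm j k]
    exact_mod_cast Nat.add_choose_mul_factorial_mul_factorial k j
  rw [besselJTerm, hΓ, Gamma_nat_add_half_eq_factorial, hexp, div_div,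
    show (2 : ℝ) * 2 = 4 by norm_num, rpow_nat_sub_half (by positivity), hsqrt,
    rpow_sub pi_pos, rpow_one, rpow_natCast, a, hchoose]
  field_simp
  rw [mul_add, sq_sqrt pi_pos.le, neg_pow, div_pow, div_pow]
  field_simp
  ring

theorem t_eq_besselJ_general (j : ℕ) :
    t j = π ^ ((1 : ℝ) - j) / (2 * Nat.factorial j) * besselJ ((j : ℝ) - 1 / 2) (π / 2) := by
  rw [t, besselJ_eq_tsum_besselJTerm, ← tsum_mul_left]
  exact tsum_congr fun k => a_eq_mul_besselJTerm j k

/-- For `j ≥ 1`, `t_j = (π^{1−j}/(2 j!)) · J_{j−1/2}(π/2)`. -/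
theorem t_eq_besselJ (j : ℕ) (hj : 1 ≤ j) :
    t j = π ^ ((1 : ℝ) - j) / (2 * Nat.factorial j) * besselJ ((j : ℝ) - 1 / 2) (π / 2) :=
  t_eq_besselJ_general j
end

section
/- For every real number x, sin(πx) = Σ_{j=1}^∞ t_j π^{2j} (x(1 − x))^j, where the series converges (absolutely). -/
open Real Finset

lemma a_mul (y : ℝ) {n i : ℕ} (h : i ≤ n) :
    a i (n - i) * π ^ (2 * i) * y ^ i
      = (π ^ 2 * y) ^ i * (-(π ^ 2) / 4) ^ (n - i) * (n.choose i) /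
          (Nat.factorial (2 * n)) := by
  unfold a
  have h1 : 2 * i + 2 * (n - i) = 2 * n := by omega
  have h2 : i + (n - i) = n := by omega
  rw [h1, h2, mul_pow, ← pow_mul]
  ring

lemma sum_antidiag (y : ℝ) (n : ℕ) :
    ∑ p ∈ antidiagonal n, a p.1 p.2 * π ^ (2 * p.1) * y ^ p.1
      = (π ^ 2 * y + -(π ^ 2) / 4) ^ n / (Nat.factorial (2 * n)) := by
  rw [Finset.Nat.sum_antidiagonal_eq_sum_range_succ_mk, add_pow, Finset.sum_div]
  refine Finset.sum_congr rfl fun i hi => ?_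
  rw [a_mul y (Nat.lt_succ_iff.mp (Finset.mem_range.mp hi))]

lemma sum_antidiag_abs (y : ℝ) (n : ℕ) :
    ∑ p ∈ antidiagonal n, |a p.1 p.2 * π ^ (2 * p.1) * y ^ p.1|
      = (π ^ 2 * |y| + π ^ 2 / 4) ^ n / (Nat.factorial (2 * n)) := by
  rw [Finset.Nat.sum_antidiagonal_eq_sum_range_succ_mk, add_pow, Finset.sum_div]
  refine Finset.sum_congr rfl fun i hi => ?_
  rw [a_mul y (Nat.lt_succ_iff.mp (Finset.mem_range.mp hi))]
  rw [abs_div, abs_mul, abs_mul, abs_pow, abs_pow, abs_mul, Nat.abs_cast, Nat.abs_cast,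
    abs_of_nonneg (sq_nonneg π), show |(-π ^ 2 / 4 : ℝ)| = π ^ 2 / 4 by
      rw [abs_div, abs_neg, abs_of_nonneg (sq_nonneg π)]; norm_num]

lemma maj_summable {A : ℝ} (hA : 0 ≤ A) :
    Summable fun n : ℕ => A ^ n / (Nat.factorial (2 * n)) := by
  refine Summable.of_nonneg_of_le (fun n => by positivity) (fun n => ?_)
    (Real.summable_pow_div_factorial A)
  refine div_le_div_of_nonneg_left (by positivity) ?_ ?_
  · exact_mod_cast Nat.factorial_pos n
  · exact_mod_cast Nat.factorial_le (by omega)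

set_option maxHeartbeats 1000000 in
/-- For every real `x`, `sin (π x) = Σ_{j=1}^∞ t_j π^{2j} (x(1 − x))^j`,
the series converging absolutely. -/
theorem sin_eq_tsum (x : ℝ) :
    Summable (fun j : ℕ => |t (j + 1) * π ^ (2 * (j + 1)) * (x * (1 - x)) ^ (j + 1)|) ∧
    Real.sin (π * x) = ∑' j : ℕ, t (j + 1) * π ^ (2 * (j + 1)) * (x * (1 - x)) ^ (j + 1) := by
  set y : ℝ := x * (1 - x) with hy
  set F : ℕ × ℕ → ℝ := fun p => a p.1 p.2 * π ^ (2 * p.1) * y ^ p.1 with hF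
  have hfib : ∀ n : ℕ, Summable fun p : antidiagonal n => |F (p : ℕ × ℕ)| :=
    fun n => (hasSum_fintype _).summable
  have hfib' : ∀ n : ℕ, Summable fun p : antidiagonal n => F (p : ℕ × ℕ) :=
    fun n => (hasSum_fintype _).summable
  have htsumfib : ∀ n : ℕ, (∑' p : antidiagonal n, |F (p : ℕ × ℕ)|)
      = (π ^ 2 * |y| + π ^ 2 / 4) ^ n / (Nat.factorial (2 * n)) := by
    intro n
    rw [Finset.tsum_subtype (antidiagonal n) (fun p => |F p|)]
    exact sum_antidiag_abs y n
  have hSig : Summable (fun s : (Σ n : ℕ, antidiagonal n) => |F (s.2 : ℕ × ℕ)|) := by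
    refine (summable_sigma_of_nonneg (fun _ => abs_nonneg _)).mpr ⟨hfib, ?_⟩
    simp only [htsumfib]
    exact maj_summable (by positivity)
  have hSig' : Summable (fun s : (Σ n : ℕ, antidiagonal n) => F (s.2 : ℕ × ℕ)) :=
    hSig.of_abs
  have habs : Summable fun p : ℕ × ℕ => |F p| :=
    (Finset.HasAntidiagonal.sigmaAntidiagonalEquivProd (A := ℕ)).summable_iff.mp hSig
  have hFsum : Summable F := habs.of_abs
  have hprodfib : ∀ j : ℕ, Summable fun k => |F (j, k)| :=
    ((summable_prod_of_nonneg (fun _ => abs_nonneg _)).mp habs).1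
  have hprod : Summable fun j => ∑' k, |F (j, k)| :=
    ((summable_prod_of_nonneg (fun _ => abs_nonneg _)).mp habs).2
  have hFt : ∀ j, (∑' k, F (j, k)) = t j * π ^ (2 * j) * y ^ j := by
    intro j
    simp only [hF]
    rw [tsum_mul_right, tsum_mul_right, t]
  have hg_abs : Summable fun j => |t j * π ^ (2 * j) * y ^ j| := by
    refine Summable.of_nonneg_of_le (fun _ => abs_nonneg _) (fun j => ?_) hprod
    rw [← hFt j]
    calc |∑' k, F (j, k)| = ‖∑' k, F (j, k)‖ := (Real.norm_eq_abs _).symm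
      _ ≤ ∑' k, ‖F (j, k)‖ := norm_tsum_le_tsum_norm (by simpa [Real.norm_eq_abs] using hprodfib j)
      _ = ∑' k, |F (j, k)| := by simp [Real.norm_eq_abs]
  have hg : Summable fun j => t j * π ^ (2 * j) * y ^ j := hg_abs.of_abs
  have h0 : t 0 * π ^ (2 * 0) * y ^ 0 = 0 := by
    have ht0 : t 0 = Real.cos (π / 2) := by
      rw [Real.cos_eq_tsum, t]
      refine tsum_congr fun k => ?_
      simp only [a, Nat.zero_add, Nat.choose_zero_right, Nat.cast_one, mul_one, zero_add]
      rw [show (-(π ^ 2) / 4 : ℝ) = -((π / 2) ^ 2) by ring, neg_pow, ← pow_mul]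
      ring
    rw [ht0, Real.cos_pi_div_two]
    ring
  constructor
  · exact hg_abs.comp_injective (add_left_injective 1)
  · calc Real.sin (π * x) = Real.cos (π * (x - 1/2)) := by
          rw [show π * (x - 1/2) = -(π / 2 - π * x) by ring, Real.cos_neg,
            Real.cos_pi_div_two_sub]
      _ = ∑' n, (-1) ^ n * (π * (x - 1/2)) ^ (2 * n) / (Nat.factorial (2 * n)) :=
          Real.cos_eq_tsum _
      _ = ∑' n, (π ^ 2 * y + -(π ^ 2) / 4) ^ n / (Nat.factorial (2 * n)) := by
          refine tsum_congr fun n => ?_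
          rw [show (π ^ 2 * y + -(π ^ 2) / 4 : ℝ) = -((π * (x - 1/2)) ^ 2) by rw [hy]; ring]
          conv_rhs => rw [neg_pow, ← pow_mul]
      _ = ∑' n, ∑ p ∈ antidiagonal n, F p := by
          exact tsum_congr fun n => (sum_antidiag y n).symm
      _ = ∑' n, ∑' p : antidiagonal n, F (p : ℕ × ℕ) :=
          tsum_congr fun n => (Finset.tsum_subtype _ _).symm
      _ = ∑' s : (Σ n : ℕ, antidiagonal n), F (s.2 : ℕ × ℕ) := (Summable.tsum_sigma' hfib' hSig').symm
      _ = ∑' p : ℕ × ℕ, F p := (Finset.HasAntidiagonal.sigmaAntidiagonalEquivProd (A := ℕ)).tsum_eq F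
      _ = ∑' j, ∑' k, F (j, k) := Summable.tsum_prod' hFsum (fun j => (hprodfib j).of_abs)
      _ = ∑' j, t j * π ^ (2 * j) * y ^ j := tsum_congr hFt
      _ = t 0 * π ^ (2 * 0) * y ^ 0 + ∑' j, t (j + 1) * π ^ (2 * (j + 1)) * y ^ (j + 1) :=
          Summable.tsum_eq_zero_add hg
      _ = ∑' j, t (j + 1) * π ^ (2 * (j + 1)) * y ^ (j + 1) := by rw [h0, zero_add]
end

section
/- For every real z ≠ 0 and every natural number j ≥ 2, one has T_j(z) = ((2j−3)/(2jz)) T_{j−1}(z) − (1/(4j(j−1)z)) T_{j−2}(z). -/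
open Real

/-- `T_j(z) = Σ_{k=0}^∞ (−z)^k / (2j+2k)! · C(j+k, j)`. -/
noncomputable def T (j : ℕ) (z : ℝ) : ℝ :=
  ∑' k : ℕ, (-z) ^ k / (Nat.factorial (2 * j + 2 * k)) * (Nat.choose (j + k) j)

lemma choose_le_two_pow' (n k : ℕ) : n.choose k ≤ 2 ^ n := by
  rcases le_or_gt k n with h | h
  · calc n.choose k ≤ ∑ m ∈ Finset.range (n + 1), n.choose m :=
        Finset.single_le_sum (fun i _ => Nat.zero_le _) (Finset.mem_range.2 (by omega))
    _ = 2 ^ n := Nat.sum_range_choose n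
  · simp [Nat.choose_eq_zero_of_lt h]

lemma T_summable (j : ℕ) (z : ℝ) :
    Summable (fun k : ℕ => (-z) ^ k / (Nat.factorial (2 * j + 2 * k)) * (Nat.choose (j + k) j)) := by
  apply Summable.of_abs
  apply Summable.of_nonneg_of_le (fun k => abs_nonneg _) (fun k => ?_)
    ((Real.summable_pow_div_factorial (2 * |z|)).mul_left ((2:ℝ) ^ j))
  have hfac : (0:ℝ) < (Nat.factorial (2 * j + 2 * k) : ℝ) := by
    exact_mod_cast Nat.factorial_pos _
  have hfac2 : (0:ℝ) < (Nat.factorial k : ℝ) := by exact_mod_cast Nat.factorial_pos _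
  calc |(-z) ^ k / (Nat.factorial (2 * j + 2 * k)) * (Nat.choose (j + k) j)|
      = |z| ^ k / (Nat.factorial (2 * j + 2 * k)) * (Nat.choose (j + k) j) := by
        rw [abs_mul, abs_div, abs_pow, abs_neg]
        congr 1
        · congr 1; exact abs_of_nonneg hfac.le
        · exact abs_of_nonneg (by positivity)
    _ ≤ |z| ^ k / (Nat.factorial k) * ((2:ℝ) ^ (j + k)) := by
        gcongr
        · omega
        · exact_mod_cast choose_le_two_pow' (j + k) j
    _ = (2:ℝ) ^ j * ((2 * |z|) ^ k / (Nat.factorial k)) := by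
        rw [mul_pow, pow_add]; ring

lemma choose_identity (m k : ℕ) :
    2 * ((m:ℝ) + 1) * (2 * m + 1) * (Nat.choose (m + k + 2) (m + 1))
      + 4 * ((m:ℝ) + 2) * ((m:ℝ) + 1) * (Nat.choose (m + k + 2) (m + 2))
    = (2 * (m:ℝ) + 2 * k + 4) * (2 * (m:ℝ) + 2 * k + 3) * (Nat.choose (m + k + 1) m) := by
  have h1 : m + 1 ≤ m + k + 2 := by omega
  have h2 : m + 2 ≤ m + k + 2 := by omega
  have h3 : m ≤ m + k + 1 := by omega
  rw [Nat.cast_choose ℝ h1, Nat.cast_choose ℝ h2, Nat.cast_choose ℝ h3]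
  have e1 : m + k + 2 - (m + 1) = k + 1 := by omega
  have e2 : m + k + 2 - (m + 2) = k := by omega
  have e3 : m + k + 1 - m = k + 1 := by omega
  rw [e1, e2, e3]
  have f1 : (Nat.factorial (m + k + 2) : ℝ) = ((m:ℝ) + k + 2) * (Nat.factorial (m + k + 1)) := by
    have := Nat.factorial_succ (m + k + 1)
    push_cast [this]; ring
  have f2 : (Nat.factorial (m + 2) : ℝ) = ((m:ℝ) + 2) * (Nat.factorial (m + 1)) := by
    have := Nat.factorial_succ (m + 1)
    push_cast [this]; ring
  have f3 : (Nat.factorial (m + 1) : ℝ) = ((m:ℝ) + 1) * (Nat.factorial m) := by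
    have := Nat.factorial_succ m
    push_cast [this]; ring
  have f4 : (Nat.factorial (k + 1) : ℝ) = ((k:ℝ) + 1) * (Nat.factorial k) := by
    have := Nat.factorial_succ k
    push_cast [this]; ring
  have nm : (Nat.factorial m : ℝ) ≠ 0 := by exact_mod_cast (Nat.factorial_pos m).ne'
  have nk : (Nat.factorial k : ℝ) ≠ 0 := by exact_mod_cast (Nat.factorial_pos k).ne'
  have nmk : (Nat.factorial (m + k + 1) : ℝ) ≠ 0 := by
    exact_mod_cast (Nat.factorial_pos (m + k + 1)).ne'
  rw [f1, f2, f3, f4]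
  field_simp
  ring

/-- For `z ≠ 0` and `j ≥ 2`,
`T_j(z) = ((2j−3)/(2jz)) T_{j−1}(z) − (1/(4j(j−1)z)) T_{j−2}(z)`. -/
theorem T_recurrence (z : ℝ) (hz : z ≠ 0) (j : ℕ) (hj : 2 ≤ j) :
    T j z = (2 * (j : ℝ) - 3) / (2 * j * z) * T (j - 1) z
      - 1 / (4 * j * ((j : ℝ) - 1) * z) * T (j - 2) z := by
  obtain ⟨m, rfl⟩ : ∃ m, j = m + 2 := ⟨j - 2, by omega⟩
  have hs2 := T_summable (m + 2) z
  have hs1 := T_summable (m + 1) z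
  have hs0 := T_summable m z
  set f : ℕ → ℕ → ℝ := fun i k =>
    (-z) ^ k / (Nat.factorial (2 * i + 2 * k)) * (Nat.choose (i + k) i) with hf
  have hf0 : ∀ i : ℕ, f i 0 = 1 / (Nat.factorial (2 * i)) := by
    intro i; simp [hf]
  -- key identity
  have key : 4 * ((m:ℝ) + 2) * ((m:ℝ) + 1) * z * T (m + 2) z
      = 2 * ((m:ℝ) + 1) * (2 * m + 1) * T (m + 1) z - T m z := by
    have hL : 4 * ((m:ℝ) + 2) * ((m:ℝ) + 1) * z * T (m + 2) z
        = ∑' k : ℕ, 4 * ((m:ℝ) + 2) * ((m:ℝ) + 1) * z * f (m + 2) k := by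
      rw [tsum_mul_left]; rfl
    have hR1 : T (m + 1) z = f (m + 1) 0 + ∑' k : ℕ, f (m + 1) (k + 1) :=
      Summable.tsum_eq_zero_add hs1
    have hR0 : T m z = f m 0 + ∑' k : ℕ, f m (k + 1) := Summable.tsum_eq_zero_add hs0
    have hconst : 2 * ((m:ℝ) + 1) * (2 * m + 1) * f (m + 1) 0 - f m 0 = 0 := by
      rw [hf0, hf0]
      have e : (Nat.factorial (2 * (m + 1)) : ℝ)
          = (2 * (m:ℝ) + 2) * ((2 * (m:ℝ) + 1) * (Nat.factorial (2 * m))) := by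
        have e' : 2 * (m + 1) = (2 * m + 1) + 1 := by ring
        rw [e', Nat.factorial_succ, Nat.factorial_succ]
        push_cast; ring
      rw [e]
      have h0 : (Nat.factorial (2 * m) : ℝ) ≠ 0 := by
        exact_mod_cast (Nat.factorial_pos _).ne'
      field_simp
      ring
    have hterm : ∀ k : ℕ, 4 * ((m:ℝ) + 2) * ((m:ℝ) + 1) * z * f (m + 2) k
        = 2 * ((m:ℝ) + 1) * (2 * m + 1) * f (m + 1) (k + 1) - f m (k + 1) := by
      intro k
      simp only [hf]
      have a1 : 2 * (m + 2) + 2 * k = 2 * m + 2 * k + 4 := by ring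
      have a2 : 2 * (m + 1) + 2 * (k + 1) = 2 * m + 2 * k + 4 := by ring
      have a3 : 2 * m + 2 * (k + 1) = 2 * m + 2 * k + 2 := by ring
      have a4 : m + 2 + k = m + k + 2 := by ring
      have a5 : m + 1 + (k + 1) = m + k + 2 := by ring
      have a6 : m + (k + 1) = m + k + 1 := by ring
      rw [a1, a2, a3, a4, a5, a6]
      have h0 : (Nat.factorial (2 * m + 2 * k + 2) : ℝ) ≠ 0 := by
        exact_mod_cast (Nat.factorial_pos _).ne'
      have hzc : (2 * (m:ℝ) + 2 * k + 4) ≠ 0 := by positivity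
      have hzc2 : (2 * (m:ℝ) + 2 * k + 3) ≠ 0 := by positivity
      have fbig : (Nat.factorial (2 * m + 2 * k + 4) : ℝ)
          = (2 * (m:ℝ) + 2 * k + 4) * ((2 * (m:ℝ) + 2 * k + 3)
            * (Nat.factorial (2 * m + 2 * k + 2))) := by
        have e : 2 * m + 2 * k + 4 = (2 * m + 2 * k + 3) + 1 := by ring
        rw [e, Nat.factorial_succ, Nat.factorial_succ]
        push_cast; ring
      have hc := choose_identity m k
      have hc' : 2 * ((m:ℝ) + 1) * (2 * m + 1)
            * ((Nat.choose (m + k + 2) (m + 1) : ℝ) / (Nat.factorial (2 * m + 2 * k + 4)))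
          - (Nat.choose (m + k + 1) m : ℝ) / (Nat.factorial (2 * m + 2 * k + 2))
          = -(4 * ((m:ℝ) + 2) * ((m:ℝ) + 1))
            * ((Nat.choose (m + k + 2) (m + 2) : ℝ) / (Nat.factorial (2 * m + 2 * k + 4))) := by
        have e0 : (Nat.choose (m + k + 1) m : ℝ) / (Nat.factorial (2 * m + 2 * k + 2))
            = ((2 * (m:ℝ) + 2 * k + 4) * (2 * (m:ℝ) + 2 * k + 3) * (Nat.choose (m + k + 1) m))
              / ((2 * (m:ℝ) + 2 * k + 4) * (2 * (m:ℝ) + 2 * k + 3)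
                * (Nat.factorial (2 * m + 2 * k + 2))) := by
          rw [mul_div_mul_left _ _ (mul_ne_zero hzc hzc2)]
        rw [fbig, e0]
        linear_combination (1 / ((2 * (m:ℝ) + 2 * k + 4) * ((2 * (m:ℝ) + 2 * k + 3)
          * (Nat.factorial (2 * m + 2 * k + 2) : ℝ)))) * hc
      rw [pow_succ]
      linear_combination ((-z) ^ k * z) * hc'
    have hsum1' : Summable (fun k : ℕ => f (m + 1) (k + 1)) :=
      (summable_nat_add_iff 1).2 hs1
    have hsum0' : Summable (fun k : ℕ => f m (k + 1)) :=
      (summable_nat_add_iff 1).2 hs0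
    calc 4 * ((m:ℝ) + 2) * ((m:ℝ) + 1) * z * T (m + 2) z
        = ∑' k : ℕ, 4 * ((m:ℝ) + 2) * ((m:ℝ) + 1) * z * f (m + 2) k := hL
      _ = ∑' k : ℕ, (2 * ((m:ℝ) + 1) * (2 * m + 1) * f (m + 1) (k + 1) - f m (k + 1)) :=
          tsum_congr hterm
      _ = 2 * ((m:ℝ) + 1) * (2 * m + 1) * (∑' k : ℕ, f (m + 1) (k + 1))
          - ∑' k : ℕ, f m (k + 1) := by
          rw [Summable.tsum_sub (hsum1'.mul_left _) hsum0', tsum_mul_left]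
      _ = 2 * ((m:ℝ) + 1) * (2 * m + 1) * T (m + 1) z - T m z := by
          rw [hR1, hR0]
          linear_combination -hconst
  -- finish
  have e1 : (m + 2) - 1 = m + 1 := by omega
  have e2 : (m + 2) - 2 = m := by omega
  rw [e1, e2]
  have c1 : ((m + 2 : ℕ) : ℝ) = (m:ℝ) + 2 := by push_cast; ring
  rw [c1]
  have h1 : ((m:ℝ) + 2) ≠ 0 := by positivity
  have h2 : ((m:ℝ) + 1) ≠ 0 := by positivity
  have h4 : (4 * ((m:ℝ) + 2) * ((m:ℝ) + 1) * z) ≠ 0 := by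
    intro h
    rcases mul_eq_zero.1 h with h' | h'
    · rcases mul_eq_zero.1 h' with h'' | h''
      · rcases mul_eq_zero.1 h'' with h3 | h3
        · norm_num at h3
        · exact h1 h3
      · exact h2 h''
    · exact hz h'
  have hT : T (m + 2) z
      = (2 * ((m:ℝ) + 1) * (2 * m + 1) * T (m + 1) z - T m z)
        / (4 * ((m:ℝ) + 2) * ((m:ℝ) + 1) * z) := by
    rw [eq_div_iff h4]; linear_combination key
  rw [hT]
  have h3 : ((m:ℝ) + 2 - 1) ≠ 0 := by
    have : (0:ℝ) ≤ (m:ℝ) := Nat.cast_nonneg m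
    intro h; nlinarith
  field_simp
  ring
end

section
/- For every real x with 0 ≤ x ≤ 1/2, one has f(x) := 4/9 + 15x² − 8x + (4/π²)·(2 sin²(πx) + sin²(2πx)) > 0. -/
/-! Since `4 (2 sin² u + sin² 2u) = 6 - 4 cos 2u - 2 cos 4u`, the upper Taylor bound of
degree 8 for `cos` on `[0, ∞)` bounds the trigonometric term below by `x² trigPoly (π² x²)`
with `trigPoly` a decreasing cubic; with `π² ≤ 9.87` this leaves a one-variable polynomial
inequality on `[0, 1/4]`.
On `[1/4, 1/2]` we have `cos 2πx ≤ 0`, hence `2 sin² πx + sin² 2πx ≥ 2`, and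
`8/π² > 28/45 ≥ -(4/9 + 15x² - 8x)`. -/

open Real

open scoped Nat

noncomputable def cosTaylor (n : ℕ) (x : ℝ) : ℝ :=
  ∑ k ∈ Finset.range n, (-1) ^ k * x ^ (2 * k) / (2 * k)!

noncomputable def sinTaylor (n : ℕ) (x : ℝ) : ℝ :=
  ∑ k ∈ Finset.range n, (-1) ^ k * x ^ (2 * k + 1) / (2 * k + 1)!

theorem hasDerivAt_pow_succ_div_factorial (m : ℕ) (x : ℝ) :
    HasDerivAt (fun y : ℝ ↦ y ^ (m + 1) / (m + 1)!) (x ^ m / m !) x := by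
  refine ((hasDerivAt_pow (m + 1) x).div_const ((m + 1)! : ℝ)).congr_deriv ?_
  rw [Nat.factorial_succ, Nat.cast_mul]
  field_simp
  push_cast
  ring

theorem hasDerivAt_sinTaylor (n : ℕ) (x : ℝ) : HasDerivAt (sinTaylor n) (cosTaylor n x) x := by
  unfold sinTaylor cosTaylor
  simp_rw [mul_div_assoc]
  exact HasDerivAt.fun_sum fun k _ ↦ (hasDerivAt_pow_succ_div_factorial (2 * k) x).const_mul _

theorem hasDerivAt_cosTaylor_succ (n : ℕ) (x : ℝ) :
    HasDerivAt (cosTaylor (n + 1)) (-sinTaylor n x) x := by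
  have h : cosTaylor (n + 1) = fun y ↦
      ∑ k ∈ Finset.range n, -((-1 : ℝ) ^ k * (y ^ (2 * k + 1 + 1) / (2 * k + 1 + 1)!))
        + 1 := by
    ext y
    simp only [cosTaylor, Finset.sum_range_succ', pow_succ, mul_add, mul_zero, pow_zero,
      Nat.factorial_zero, Nat.cast_one, div_one, mul_one]
    congr 1
    refine Finset.sum_congr rfl fun k _ ↦ ?_
    ring_nf
  rw [h, sinTaylor, ← Finset.sum_neg_distrib]
  simp_rw [mul_div_assoc]
  exact (HasDerivAt.fun_sum fun k _ ↦
    ((hasDerivAt_pow_succ_div_factorial (2 * k + 1) x).const_mul _).neg).add_const 1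

theorem nonneg_of_hasDerivAt_of_nonneg {f f' : ℝ → ℝ} (hf : ∀ x, HasDerivAt f (f' x) x)
    (hf0 : f 0 = 0) (hf' : ∀ x, 0 ≤ x → 0 ≤ f' x) {x : ℝ} (hx : 0 ≤ x) : 0 ≤ f x := by
  have hmono : MonotoneOn f (Set.Ici 0) :=
    monotoneOn_of_hasDerivWithinAt_nonneg (convex_Ici 0)
      (fun y _ ↦ (hf y).continuousAt.continuousWithinAt)
      (fun y _ ↦ (hf y).hasDerivWithinAt)
      (fun y hy ↦ hf' y (by simpa using interior_subset hy))
  simpa [hf0] using hmono Set.self_mem_Ici hx hx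

theorem sin_sub_sinTaylor_alternating_of_cos {n : ℕ}
    (hcos : ∀ y, 0 ≤ y → 0 ≤ (-1) ^ n * (cos y - cosTaylor n y)) {x : ℝ} (hx : 0 ≤ x) :
    0 ≤ (-1) ^ n * (sin x - sinTaylor n x) :=
  nonneg_of_hasDerivAt_of_nonneg
    (fun y ↦ (((hasDerivAt_sin y).sub (hasDerivAt_sinTaylor n y)).const_mul _))
    (by simp [sinTaylor]) hcos hx

theorem cos_sub_cosTaylor_alternating_of_sin {n : ℕ}
    (hsin : ∀ y, 0 ≤ y → 0 ≤ (-1) ^ n * (sin y - sinTaylor n y)) {x : ℝ} (hx : 0 ≤ x) :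
    0 ≤ (-1) ^ (n + 1) * (cos x - cosTaylor (n + 1) x) :=
  nonneg_of_hasDerivAt_of_nonneg
    (fun y ↦ (((hasDerivAt_cos y).sub (hasDerivAt_cosTaylor_succ n y)).const_mul _))
    (by simp [cosTaylor, Finset.sum_range_succ'])
    (fun y hy ↦ by convert hsin y hy using 1; ring) hx

theorem cos_sub_cosTaylor_alternating (n : ℕ) {x : ℝ} (hx : 0 ≤ x) :
    0 ≤ (-1) ^ (n + 1) * (cos x - cosTaylor (n + 1) x) := by
  induction n generalizing x with
  | zero => simpa [cosTaylor] using cos_le_one x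
  | succ n ih =>
    exact cos_sub_cosTaylor_alternating_of_sin
      (fun _ ↦ sin_sub_sinTaylor_alternating_of_cos fun _ ↦ ih) hx

/-- `u² trigPoly (u²)` is the Taylor polynomial of degree 8 of `6 - 4 cos 2u - 2 cos 4u`. -/
noncomputable def trigPoly (w : ℝ) : ℝ := 24 - 24 * w + 176 / 15 * w ^ 2 - 344 / 105 * w ^ 3

theorem sq_mul_trigPoly_le {u : ℝ} (hu : 0 ≤ u) :
    u ^ 2 * trigPoly (u ^ 2) ≤ 4 * (2 * sin u ^ 2 + sin (2 * u) ^ 2) := by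
  have hcos : ∀ v, 0 ≤ v → cos v ≤ cosTaylor 5 v := fun v hv ↦ by
    have := cos_sub_cosTaylor_alternating 4 hv
    norm_num at this
    linarith
  have h2 := hcos (2 * u) (by positivity)
  have h4 := hcos (2 * (2 * u)) (by positivity)
  simp only [cosTaylor, Finset.sum_range_succ, Finset.sum_range_zero] at h2 h4
  norm_num [Nat.factorial] at h2 h4
  rw [sin_sq_eq_half_sub u, sin_sq_eq_half_sub (2 * u), trigPoly]
  linarith

theorem trigPoly_antitone : Antitone trigPoly := by
  intro a b hab
  have hq : 0 ≤ 24 - 176 / 15 * (a + b) + 344 / 105 * (a ^ 2 + a * b + b ^ 2) := by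
    nlinarith [sq_nonneg (a + b - 12 / 5), sq_nonneg (a - b)]
  have hdiff : trigPoly a - trigPoly b =
      (b - a) * (24 - 176 / 15 * (a + b) + 344 / 105 * (a ^ 2 + a * b + b ^ 2)) := by
    unfold trigPoly
    ring
  nlinarith [mul_nonneg (sub_nonneg.2 hab) hq]

-- The minimum, about `5 · 10⁻⁵`, is attained near `x = 0.1227`.
theorem quadratic_add_sq_mul_trigPoly_pos {x : ℝ} (hx0 : 0 ≤ x) (hx : x ≤ 1 / 4) :
    0 < 4 / 9 + 15 * x ^ 2 - 8 * x + x ^ 2 * trigPoly (987 / 100 * x ^ 2) := by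
  unfold trigPoly
  nlinarith [sq_nonneg (x - 12269 / 100000), sq_nonneg (x ^ 2 - 12269 / 100000 * x),
    mul_nonneg hx0 (sub_nonneg.2 hx), sq_nonneg (x ^ 3 - 12269 / 100000 * x ^ 2),
    sq_nonneg (x ^ 4 - 12269 / 100000 * x ^ 3)]

theorem two_le_two_mul_sin_sq_add_sin_two_mul_sq {u : ℝ} (h : cos (2 * u) ≤ 0) :
    2 ≤ 2 * sin u ^ 2 + sin (2 * u) ^ 2 := by
  rw [sin_sq_eq_half_sub u, sin_sq (2 * u)]
  nlinarith [neg_one_le_cos (2 * u)]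

/-- For `0 ≤ x ≤ 1/2`,
`4/9 + 15x² − 8x + (4/π²)(2 sin²(πx) + sin²(2πx)) > 0`. -/
theorem f_pos (x : ℝ) (hx1 : 0 ≤ x) (hx2 : x ≤ 1 / 2) :
    0 < 4 / 9 + 15 * x ^ 2 - 8 * x +
      4 * (2 * Real.sin (π * x) ^ 2 + Real.sin (2 * π * x) ^ 2) / π ^ 2 := by
  have hπ : π ^ 2 ≤ 987 / 100 := by nlinarith [pi_lt_d4, pi_pos]
  rw [show 2 * π * x = 2 * (π * x) by ring]
  rcases le_or_gt x (1 / 4) with hx | hx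
  · have htrig : x ^ 2 * trigPoly (987 / 100 * x ^ 2) ≤
        4 * (2 * sin (π * x) ^ 2 + sin (2 * (π * x)) ^ 2) / π ^ 2 :=
      calc x ^ 2 * trigPoly (987 / 100 * x ^ 2)
          ≤ x ^ 2 * trigPoly ((π * x) ^ 2) := by
            gcongr
            exact trigPoly_antitone (by rw [mul_pow]; gcongr)
        _ = (π * x) ^ 2 * trigPoly ((π * x) ^ 2) / π ^ 2 := by field_simp
        _ ≤ _ := div_le_div_of_nonneg_right (sq_mul_trigPoly_le (by positivity)) (by positivity)
    linarith [quadratic_add_sq_mul_trigPoly_pos hx1 hx]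
  · have hcos : cos (2 * (π * x)) ≤ 0 :=
      cos_nonpos_of_pi_div_two_le_of_le (by nlinarith [pi_pos]) (by nlinarith [pi_pos])
    have htrig : 8 / π ^ 2 ≤ 4 * (2 * sin (π * x) ^ 2 + sin (2 * (π * x)) ^ 2) / π ^ 2 := by
      gcongr
      linarith [two_le_two_mul_sin_sq_add_sin_two_mul_sq hcos]
    have hπ8 : 4 / 5 ≤ 8 / π ^ 2 := by
      rw [le_div_iff₀ (by positivity)]
      linarith
    linarith [sq_nonneg (x - 4 / 15)]
end
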